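/- Let X be a compact metric space, Y ⊆ X a closed subset, μ a finite Borel measure on X, and (μ_k) a sequence of finite Borel measures on X. Assume: (i) for every continuous function φ : X → ℝ whose support is a compact subset of X \ Y one has ∫ φ dμ_k → ∫ φ dμ; (ii) μ(Y) = 0; (iii) μ_k(X) → μ(X). Then μ_k converges weakly to μ on all of X, i.e. for every continuous function φ : X → ℝ one has ∫ φ dμ_k → ∫ φ dμ. -/

import Mathlib

open MeasureTheory Filter

/-- Let `X` be a compact metric space, `Y ⊆ X` closed, `μ` a finite Borel measure on `X`
and `μ_k` a sequence of finite Borel measures on `X`. If `μ_k` converges to `μ` against every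
continuous function compactly supported in `X \ Y`, `μ(Y) = 0`, and the total masses converge,
then `μ_k` converges weakly to `μ` on all of `X`. -/
theorem stmt_0 {X : Type*} [MetricSpace X] [CompactSpace X]
    [MeasurableSpace X] [BorelSpace X]
    (Y : Set X) (hY : IsClosed Y)
    (μ : Measure X) [IsFiniteMeasure μ]
    (μk : ℕ → Measure X) (hμk : ∀ k, IsFiniteMeasure (μk k))
    (hconv : ∀ φ : X → ℝ, Continuous φ → HasCompactSupport φ → tsupport φ ⊆ Yᶜ →
      Tendsto (fun k => ∫ x, φ x ∂(μk k)) atTop (nhds (∫ x, φ x ∂μ)))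
    (hμY : μ Y = 0)
    (hmass : Tendsto (fun k => μk k Set.univ) atTop (nhds (μ Set.univ))) :
    ∀ φ : X → ℝ, Continuous φ →
      Tendsto (fun k => ∫ x, φ x ∂(μk k)) atTop (nhds (∫ x, φ x ∂μ)) := by
  haveI := hμk
  intro φ hφ
  -- bound on φ
  obtain ⟨C₀, hC₀⟩ := isCompact_univ.exists_bound_of_continuousOn hφ.continuousOn
  set C : ℝ := max C₀ 0 with hCdef
  have hC : ∀ x, ‖φ x‖ ≤ C := fun x => (hC₀ x trivial).trans (le_max_left _ _)
  have hC0 : 0 ≤ C := le_max_right _ _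
  rw [Metric.tendsto_atTop]
  intro ε hε
  set δ : ℝ := ε / (4 * (C + 1)) with hδdef
  have hC1 : (0:ℝ) < C + 1 := by linarith
  have hδ : 0 < δ := by positivity
  -- outer regularity: open U ⊇ Y with μ U < δ
  have hlt : μ Y < ENNReal.ofReal δ := by
    rw [hμY]; exact ENNReal.ofReal_pos.2 hδ
  obtain ⟨U, hYU, hUopen, hUμ⟩ := Y.exists_isOpen_lt_of_lt _ hlt
  have hUμR : (μ U).toReal < δ := by
    rw [← ENNReal.ofReal_toReal hUμ.ne_top] at hUμ
    have := (ENNReal.ofReal_lt_ofReal_iff hδ).1 hUμ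
    exact this
  -- shrink: open V with Y ⊆ V, closure V ⊆ U
  obtain ⟨V, hVopen, hYV, hVU⟩ := normal_exists_closure_subset hY hUopen hYU
  -- Urysohn: f = 0 on closure V, f = 1 on Uᶜ
  obtain ⟨f, hf0, hf1, hf01⟩ := exists_continuous_zero_one_of_isClosed
    isClosed_closure (isClosed_compl_iff.2 hUopen)
    (Set.disjoint_compl_right_iff_subset.2 hVU)
  have hfsupp : tsupport f ⊆ Yᶜ := by
    have h1 : Function.support f ⊆ Vᶜ := by
      intro x hx
      by_contra hxV
      exact hx (hf0 (subset_closure (not_not.1 hxV)))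
    have : tsupport f ⊆ Vᶜ := closure_minimal h1 (hVopen.isClosed_compl)
    exact this.trans (Set.compl_subset_compl.2 hYV)
  have hfC : HasCompactSupport f := (isClosed_tsupport _).isCompact
  -- the good part g = φ * f
  set g : X → ℝ := fun x => φ x * f x with hgdef
  have hgcont : Continuous g := hφ.mul f.continuous
  have hgsupp : tsupport g ⊆ Yᶜ := by
    refine (closure_minimal ?_ (isClosed_tsupport f)).trans hfsupp
    intro x hx
    have : f x ≠ 0 := fun h => hx (by simp [hgdef, h])
    exact subset_closure this
  have hgC : HasCompactSupport g := (isClosed_tsupport _).isCompact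
  have hA := hconv g hgcont hgC hgsupp
  have hB := hconv f f.continuous hfC hfsupp
  -- masses in ℝ
  have hmassR : Tendsto (fun k => (μk k Set.univ).toReal) atTop
      (nhds ((μ Set.univ).toReal)) :=
    (ENNReal.tendsto_toReal (measure_ne_top μ _)).comp hmass
  -- integrability facts
  have hint : ∀ (ν : Measure X) [IsFiniteMeasure ν] (ψ : X → ℝ), Continuous ψ →
      Integrable ψ ν := fun ν _ ψ hψ =>
    hψ.integrable_of_hasCompactSupport (isClosed_tsupport _).isCompact
  -- ∫ (1 - f) dν = mass - ∫ f dν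
  have honemf : ∀ (ν : Measure X) [IsFiniteMeasure ν],
      ∫ x, (1 - f x) ∂ν = (ν Set.univ).toReal - ∫ x, f x ∂ν := by
    intro ν _
    rw [integral_sub (integrable_const 1) (hint ν f f.continuous), integral_const]
    simp; rfl
  -- bound: ∫ (1-f) dμ ≤ μ U < δ
  have hμ1f : ∫ x, (1 - f x) ∂μ ≤ (μ U).toReal := by
    have hle : ∀ x, 1 - f x ≤ U.indicator (fun _ => (1:ℝ)) x := by
      intro x
      by_cases hx : x ∈ U
      · simp only [Set.indicator_of_mem hx]
        linarith [(hf01 x).1]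
      · simp only [Set.indicator_of_notMem hx]
        have : f x = 1 := hf1 hx
        simp [this]
    calc ∫ x, (1 - f x) ∂μ ≤ ∫ x, U.indicator (fun _ => (1:ℝ)) x ∂μ := by
          refine integral_mono (hint μ _ (continuous_const.sub f.continuous)) ?_ hle
          exact (integrable_const 1).indicator hUopen.measurableSet
      _ = (μ U).toReal := by
          rw [integral_indicator hUopen.measurableSet]; simp; rfl
  have hμ1f' : ∫ x, (1 - f x) ∂μ < δ := lt_of_le_of_lt hμ1f hUμR
  -- ∫ (1-f) dμk → ∫ (1-f) dμ
  have h1fconv : Tendsto (fun k => ∫ x, (1 - f x) ∂(μk k)) atTop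
      (nhds (∫ x, (1 - f x) ∂μ)) := by
    have := hmassR.sub hB
    rw [← honemf μ] at this
    refine this.congr fun k => ?_
    rw [honemf (μk k)]
  -- nonneg of 1 - f
  have h1fnn : ∀ x, 0 ≤ 1 - f x := fun x => by linarith [(hf01 x).2]
  -- bound |∫ φ(1-f) dν| ≤ C ∫ (1-f) dν
  have hbd : ∀ (ν : Measure X) [IsFiniteMeasure ν],
      |∫ x, φ x * (1 - f x) ∂ν| ≤ C * ∫ x, (1 - f x) ∂ν := by
    intro ν _
    calc |∫ x, φ x * (1 - f x) ∂ν| ≤ ∫ x, |φ x * (1 - f x)| ∂ν :=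
          by
          simpa only [Real.norm_eq_abs] using
            norm_integral_le_integral_norm (μ := ν) (fun x => φ x * (1 - f x))
      _ ≤ ∫ x, C * (1 - f x) ∂ν := by
          refine integral_mono ((hint ν _ (hφ.mul (continuous_const.sub f.continuous))).abs) ?_ fun x => ?_
          · exact (hint ν _ (continuous_const.mul (continuous_const.sub f.continuous)))
          · rw [abs_mul, abs_of_nonneg (h1fnn x)]
            exact mul_le_mul_of_nonneg_right (hC x) (h1fnn x)
      _ = C * ∫ x, (1 - f x) ∂ν := integral_const_mul C _
  -- decomposition: φ = g + φ(1-f)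
  have hdecomp : ∀ (ν : Measure X) [IsFiniteMeasure ν],
      ∫ x, φ x ∂ν = ∫ x, g x ∂ν + ∫ x, φ x * (1 - f x) ∂ν := by
    intro ν _
    rw [← integral_add (hint ν _ hgcont) (hint ν (fun x => φ x * (1 - f x)) (hφ.mul (continuous_const.sub f.continuous)))]
    congr 1; funext x; simp [hgdef]; ring
  -- eventual bounds
  have hAev : ∀ᶠ k in atTop, |∫ x, g x ∂(μk k) - ∫ x, g x ∂μ| < δ := by
    have := Metric.tendsto_atTop.1 hA
    obtain ⟨N, hN⟩ := this δ hδ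
    exact eventually_atTop.2 ⟨N, fun k hk => by simpa [Real.dist_eq] using hN k hk⟩
  have hBev : ∀ᶠ k in atTop, ∫ x, (1 - f x) ∂(μk k) < 2 * δ := by
    have : ∀ᶠ k in atTop, ∫ x, (1 - f x) ∂(μk k) < ∫ x, (1 - f x) ∂μ + δ :=
      h1fconv.eventually (Filter.Tendsto.eventually_lt_const (by linarith) tendsto_id)
    filter_upwards [this] with k hk
    linarith
  rw [← eventually_atTop]
  filter_upwards [hAev, hBev] with k hA' hB'
  have h1fknn : 0 ≤ ∫ x, (1 - f x) ∂(μk k) :=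
    integral_nonneg h1fnn
  have h1fμnn : 0 ≤ ∫ x, (1 - f x) ∂μ := integral_nonneg h1fnn
  have hbdk := hbd (μk k)
  have hbdμ := hbd μ
  rw [Real.dist_eq, hdecomp (μk k), hdecomp μ]
  have e1 : |∫ x, φ x * (1 - f x) ∂(μk k)| ≤ C * (2 * δ) :=
    hbdk.trans (mul_le_mul_of_nonneg_left hB'.le hC0)
  have e2 : |∫ x, φ x * (1 - f x) ∂μ| ≤ C * δ :=
    hbdμ.trans (mul_le_mul_of_nonneg_left hμ1f'.le hC0)
  have hεδ : ε = 4 * (C + 1) * δ := by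
    rw [hδdef]; exact (mul_div_cancel₀ ε (by positivity : (4 * (C + 1) : ℝ) ≠ 0)).symm
  calc |∫ x, g x ∂(μk k) + ∫ x, φ x * (1 - f x) ∂(μk k)
        - (∫ x, g x ∂μ + ∫ x, φ x * (1 - f x) ∂μ)|
      ≤ |∫ x, g x ∂(μk k) - ∫ x, g x ∂μ| + |∫ x, φ x * (1 - f x) ∂(μk k)|
        + |∫ x, φ x * (1 - f x) ∂μ| := by
        have := abs_sub (∫ x, g x ∂(μk k) + ∫ x, φ x * (1 - f x) ∂(μk k))
          (∫ x, g x ∂μ + ∫ x, φ x * (1 - f x) ∂μ)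
        calc _ = |(∫ x, g x ∂(μk k) - ∫ x, g x ∂μ)
              + (∫ x, φ x * (1 - f x) ∂(μk k) - ∫ x, φ x * (1 - f x) ∂μ)| := by ring_nf
          _ ≤ |∫ x, g x ∂(μk k) - ∫ x, g x ∂μ|
              + |∫ x, φ x * (1 - f x) ∂(μk k) - ∫ x, φ x * (1 - f x) ∂μ| := abs_add_le _ _
          _ ≤ _ := by
              have := abs_sub (∫ x, φ x * (1 - f x) ∂(μk k)) (∫ x, φ x * (1 - f x) ∂μ)
              linarith
    _ < δ + C * (2 * δ) + C * δ := by
        have : |∫ x, g x ∂(μk k) - ∫ x, g x ∂μ| < δ := hA'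
        nlinarith
    _ ≤ ε := by rw [hεδ]; nlinarith
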